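/- arXiv:math/0412243 — 2 statements merged into one kernel-verified Lean document; each statement's English description precedes it below -/
import Mathlib

section
/- For every row-finite directed graph E, the graph monoid M_E is a refinement monoid: whenever a + b = c + d in M_E, there exist x, y, z, t ∈ M_E with a = x + y, b = z + t, c = x + z and d = y + t. -/
/-- A row-finite directed graph: vertex set `V`, edge set `Edge`,
source and range maps, with every vertex emitting finitely many edges. -/
structure RFGraph where
  V : Type
  Edge : Type
  s : Edge → V
  r : Edge → V
  rowFinite : ∀ v : V, {e : Edge | s e = v}.Finite

namespace RFGraph

/-- The free abelian monoid on the vertex set. -/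
abbrev F (G : RFGraph) : Type := G.V →₀ ℕ

/-- `v` emits at least one edge. -/
def emits (G : RFGraph) (v : G.V) : Prop := ∃ e : G.Edge, G.s e = v

/-- `𝐫(v) = Σ_{e ∈ s⁻¹(v)} r(e)` in the free abelian monoid. -/
noncomputable def rr (G : RFGraph) (v : G.V) : G.F :=
  ∑ e ∈ (G.rowFinite v).toFinset, Finsupp.single (G.r e) 1

/-- The one-step relation `→₁`: `α →₁ β` iff `α = x + α'` for a vertex `x`
emitting at least one edge, and `β = 𝐫(x) + α'`. -/
def step (G : RFGraph) (α β : G.F) : Prop :=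
  ∃ (x : G.V) (α' : G.F), G.emits x ∧ α = Finsupp.single x 1 + α' ∧ β = G.rr x + α'

/-- The reflexive-transitive closure `→` of `→₁`. -/
def steps (G : RFGraph) : G.F → G.F → Prop := Relation.ReflTransGen G.step

/-- The additive congruence `∼` on `F_E` generated by `→₁`. -/
noncomputable def graphCon (G : RFGraph) : AddCon G.F := addConGen G.step

/-- The graph monoid `M_E = F_E/∼`. -/
abbrev M (G : RFGraph) : Type := G.graphCon.Quotient

/-- The class `a_v` of a vertex `v` in the graph monoid. -/
noncomputable def av (G : RFGraph) (v : G.V) : G.M := G.graphCon.mk' (Finsupp.single v 1)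

end RFGraph

/-!
Two reduction paths `α →₁ β`, `α →₁ γ` either coincide or can be joined in one step each
(they expand different vertices), so `→` is confluent and `α ∼ β` holds exactly when `α` and
`β` reduce to a common element. If `α + β ∼ γ + δ`, both sides therefore reduce to some `ε`;
a reduction of a sum is a sum of reductions of the summands, so `ε = α₁ + β₁ = γ₁ + δ₁` with
`α → α₁`, `β → β₁`, `γ → γ₁`, `δ → δ₁`. The free monoid `F_E` has refinement (take pointwise
minima), and a refinement of `α₁ + β₁ = γ₁ + δ₁` in `F_E` projects to one of `a + b = c + d`
in `M_E`.
-/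

namespace Finsupp

variable {ι : Type*}

lemma exists_single_add_of_single_add_eq_add {x : ι} {γ α β : ι →₀ ℕ}
    (h : single x 1 + γ = α + β) (hx : 1 ≤ α x) :
    ∃ α₀, α = single x 1 + α₀ ∧ γ = α₀ + β := by
  have hα : α = single x 1 + (α - single x 1) :=
    (add_tsub_cancel_of_le (single_le_iff.mpr hx)).symm
  refine ⟨_, hα, add_left_cancel (a := single x 1) ?_⟩
  rw [h, ← add_assoc, ← hα]

lemma exists_refinement_of_add_eq_add {α β γ δ : ι →₀ ℕ} (h : α + β = γ + δ) :
    ∃ x y z t, α = x + y ∧ β = z + t ∧ γ = x + z ∧ δ = y + t := by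
  refine ⟨α - (α - γ), α - γ, γ - α, β - (γ - α), ?_, ?_, ?_, ?_⟩ <;>
  · ext v
    have := DFunLike.congr_fun h v
    simp only [add_apply, tsub_apply] at this ⊢
    omega

end Finsupp

namespace RFGraph

variable {G : RFGraph}

lemma step_add_right {α β : G.F} (h : G.step α β) (δ : G.F) : G.step (α + δ) (β + δ) := by
  obtain ⟨x, α', hx, rfl, rfl⟩ := h
  exact ⟨x, α' + δ, hx, add_assoc _ _ _, add_assoc _ _ _⟩

lemma steps_add_right {α β : G.F} (h : G.steps α β) (δ : G.F) : G.steps (α + δ) (β + δ) :=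
  Relation.ReflTransGen.lift (· + δ) (fun _ _ hab ↦ step_add_right hab δ) _ _ h

lemma steps_add {α β γ δ : G.F} (h₁ : G.steps α β) (h₂ : G.steps γ δ) :
    G.steps (α + γ) (β + δ) := by
  refine (steps_add_right h₁ γ).trans ?_
  rw [add_comm β, add_comm β]
  exact steps_add_right h₂ β

lemma step_diamond {α β γ : G.F} (h₁ : G.step α β) (h₂ : G.step α γ) :
    β = γ ∨ ∃ δ, G.step β δ ∧ G.step γ δ := by
  obtain ⟨x, α', hx, hα', rfl⟩ := h₁
  obtain ⟨y, α'', hy, hα'', rfl⟩ := h₂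
  have h : Finsupp.single x 1 + α' = α'' + Finsupp.single y 1 :=
    hα'.symm.trans (hα''.trans (add_comm _ _))
  by_cases hxy : x = y
  · subst hxy
    exact .inl (congrArg _ (add_left_cancel (h.trans (add_comm _ _))))
  · have hx'' : 1 ≤ α'' x := by
      have := DFunLike.congr_fun h x
      simp only [Finsupp.add_apply, Finsupp.single_eq_same, Finsupp.single_eq_of_ne hxy] at this
      omega
    obtain ⟨ρ, rfl, rfl⟩ := Finsupp.exists_single_add_of_single_add_eq_add h hx''
    refine .inr ⟨G.rr x + G.rr y + ρ, ⟨y, G.rr x + ρ, hy, by abel, by abel⟩,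
      ⟨x, G.rr y + ρ, hx, by abel, by abel⟩⟩

lemma steps_join_equivalence : Equivalence (Relation.Join G.steps) := by
  refine Relation.equivalence_join_reflTransGen fun _ β _ h₁ h₂ ↦ ?_
  rcases step_diamond h₁ h₂ with rfl | ⟨δ, hβδ, hγδ⟩
  · exact ⟨β, .refl, .refl⟩
  · exact ⟨δ, .single hβδ, .single hγδ⟩

def joinCon (G : RFGraph) : AddCon G.F where
  r := Relation.Join G.steps
  iseqv := steps_join_equivalence
  add' := fun ⟨ε, h₁, h₂⟩ ⟨ε', h₃, h₄⟩ ↦ ⟨ε + ε', steps_add h₁ h₃, steps_add h₂ h₄⟩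

lemma graphCon_of_steps {α β : G.F} (h : G.steps α β) : G.graphCon α β := by
  induction h with
  | refl => exact G.graphCon.refl _
  | tail _ hstep ih => exact G.graphCon.trans ih (AddConGen.Rel.of _ _ hstep)

lemma graphCon_iff_join {α β : G.F} : G.graphCon α β ↔ Relation.Join G.steps α β := by
  refine ⟨fun h ↦ ?_, fun ⟨ε, hα, hβ⟩ ↦ ?_⟩
  · have hle : G.graphCon ≤ G.joinCon :=
      AddCon.addConGen_le.mpr fun _ β h ↦ ⟨β, .single h, .refl⟩
    exact hle h
  · exact G.graphCon.trans (graphCon_of_steps hα) (G.graphCon.symm (graphCon_of_steps hβ))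

lemma mk'_eq_of_steps {α β : G.F} (h : G.steps α β) : G.graphCon.mk' α = G.graphCon.mk' β :=
  (AddCon.eq _).mpr (graphCon_of_steps h)

lemma step_add_cases {α β ε : G.F} (h : G.step (α + β) ε) :
    (∃ α', G.step α α' ∧ ε = α' + β) ∨ (∃ β', G.step β β' ∧ ε = α + β') := by
  obtain ⟨x, γ, hx, hsum, rfl⟩ := h
  by_cases hαx : 1 ≤ α x
  · obtain ⟨α₀, hα, rfl⟩ := Finsupp.exists_single_add_of_single_add_eq_add hsum.symm hαx
    exact .inl ⟨G.rr x + α₀, ⟨x, α₀, hx, hα, rfl⟩, (add_assoc _ _ _).symm⟩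
  · have hβx : 1 ≤ β x := by
      have := DFunLike.congr_fun hsum x
      simp only [Finsupp.add_apply, Finsupp.single_eq_same] at this
      omega
    rw [add_comm α] at hsum
    obtain ⟨β₀, hβ, rfl⟩ := Finsupp.exists_single_add_of_single_add_eq_add hsum.symm hβx
    exact .inr ⟨G.rr x + β₀, ⟨x, β₀, hx, hβ, rfl⟩, by abel⟩

lemma exists_steps_of_steps_add {α β ε : G.F} (h : G.steps (α + β) ε) :
    ∃ α₁ β₁, ε = α₁ + β₁ ∧ G.steps α α₁ ∧ G.steps β β₁ := by
  generalize hσ : α + β = σ at h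
  induction h using Relation.ReflTransGen.head_induction_on generalizing α β with
  | refl => exact ⟨α, β, hσ.symm, .refl, .refl⟩
  | head hstep _ ih =>
    subst hσ
    rcases step_add_cases hstep with ⟨α', hαα', rfl⟩ | ⟨β', hββ', rfl⟩
    · obtain ⟨α₁, β₁, rfl, h₁, h₂⟩ := ih rfl
      exact ⟨α₁, β₁, rfl, .head hαα' h₁, h₂⟩
    · obtain ⟨α₁, β₁, rfl, h₁, h₂⟩ := ih rfl
      exact ⟨α₁, β₁, rfl, h₁, .head hββ' h₂⟩

end RFGraph

open RFGraph in
/-- The graph monoid `M_E` of a row-finite graph is a refinement monoid. -/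
theorem stmt2 (G : RFGraph) (a b c d : G.M) (h : a + b = c + d) :
    ∃ x y z t : G.M, a = x + y ∧ b = z + t ∧ c = x + z ∧ d = y + t := by
  obtain ⟨α, rfl⟩ := G.graphCon.mk'_surjective a
  obtain ⟨β, rfl⟩ := G.graphCon.mk'_surjective b
  obtain ⟨γ, rfl⟩ := G.graphCon.mk'_surjective c
  obtain ⟨δ, rfl⟩ := G.graphCon.mk'_surjective d
  rw [← map_add, ← map_add, AddCon.coe_mk', AddCon.eq, graphCon_iff_join] at h
  obtain ⟨ε, hαβ, hγδ⟩ := h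
  obtain ⟨α₁, β₁, rfl, hα, hβ⟩ := exists_steps_of_steps_add hαβ
  obtain ⟨γ₁, δ₁, hε, hγ, hδ⟩ := exists_steps_of_steps_add hγδ
  obtain ⟨x, y, z, t, rfl, rfl, rfl, rfl⟩ := Finsupp.exists_refinement_of_add_eq_add hε
  refine ⟨G.graphCon.mk' x, G.graphCon.mk' y, G.graphCon.mk' z, G.graphCon.mk' t, ?_, ?_, ?_, ?_⟩
  · rw [mk'_eq_of_steps hα, map_add]
  · rw [mk'_eq_of_steps hβ, map_add]
  · rw [mk'_eq_of_steps hγ, map_add]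
  · rw [mk'_eq_of_steps hδ, map_add]
end

section
/- Let E be a row-finite directed graph and let H ⊆ E⁰ be a hereditary and saturated subset. Let S be the order-ideal of M_E generated by { a_v : v ∈ H }, and let G be the graph with G⁰ = E⁰ ∖ H and G¹ = { e ∈ E¹ : r(e) ∉ H } (note that s(e), r(e) ∈ G⁰ for e ∈ G¹ since H is hereditary). Then the map sending a_v to 0 for v ∈ H and a_v to a_v for v ∈ E⁰ ∖ H induces a monoid isomorphism M_E/S ≅ M_G. -/
namespace RFGraph

/-- `v ≥ w`: there is a (possibly empty) directed path from `v` to `w`. -/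
def reaches (G : RFGraph) : G.V → G.V → Prop :=
  Relation.ReflTransGen (fun a b => ∃ e : G.Edge, G.s e = a ∧ G.r e = b)

/-- A subset of the vertices is hereditary. -/
def Hereditary (G : RFGraph) (H : Set G.V) : Prop :=
  ∀ v w : G.V, v ∈ H → G.reaches v w → w ∈ H

/-- A subset of the vertices is saturated. -/
def Saturated (G : RFGraph) (H : Set G.V) : Prop :=
  ∀ v : G.V, G.emits v → (∀ e : G.Edge, G.s e = v → G.r e ∈ H) → v ∈ H

/-- An order-ideal of the graph monoid: a submonoid `I` such that
`x + y ∈ I` implies `x ∈ I` and `y ∈ I`. -/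
def IsOrderIdeal (G : RFGraph) (I : Set G.M) : Prop :=
  (0 : G.M) ∈ I ∧ (∀ x y : G.M, x ∈ I → y ∈ I → x + y ∈ I) ∧
    (∀ x y : G.M, x + y ∈ I → x ∈ I ∧ y ∈ I)

/-- The order-ideal generated by a subset of the graph monoid. -/
def genOI (G : RFGraph) (S : Set G.M) : Set G.M :=
  ⋂₀ {I : Set G.M | G.IsOrderIdeal I ∧ S ⊆ I}

end RFGraph

namespace RFGraph

/-- The quotient graph `G = (E⁰ ∖ H, {e ∈ E¹ : r(e) ∉ H})` associated with a
hereditary subset `H`. -/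
def quotGraph (G : RFGraph) (H : Set G.V) (hher : G.Hereditary H) : RFGraph where
  V := {v : G.V // v ∉ H}
  Edge := {e : G.Edge // G.r e ∉ H}
  s := fun e => ⟨G.s e.1, fun hs =>
    e.2 (hher _ _ hs (Relation.ReflTransGen.single ⟨e.1, rfl, rfl⟩))⟩
  r := fun e => ⟨G.r e.1, e.2⟩
  rowFinite := fun v => by
    have h1 : (Subtype.val ⁻¹' {e : G.Edge | G.s e = v.1} :
        Set {e : G.Edge // G.r e ∉ H}).Finite :=
      Set.Finite.preimage (Subtype.val_injective.injOn) (G.rowFinite v.1)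
    exact h1.subset fun e he => congrArg Subtype.val he

/-- The congruence `∼_S` on `M_E` associated with the order-ideal `S` generated
by `{a_v : v ∈ H}`: `a ∼_S b` iff `a + e = b + f` for some `e, f ∈ S`. -/
noncomputable def quotCon (G : RFGraph) (H : Set G.V) : AddCon G.M :=
  addConGen (fun a b =>
    ∃ e ∈ G.genOI (G.av '' H), ∃ f ∈ G.genOI (G.av '' H), a + e = b + f)

end RFGraph

/-!
The map `M_E/S → M_G` and its inverse both come from the universal property of a graph monoid:
a vertex map `f` into a commutative monoid with `f x = ∑_{s(e) = x} f (r e)` for every emitting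
`x` extends to `M_E`. Collapsing `H` to `0` satisfies these relations because `H` is hereditary
(edges out of `H` stay in `H`) and saturated (a vertex outside `H` emitting in `E` still emits
in the quotient graph, so its relation there is not vacuous). The resulting map kills `S`
because `M_G` is conical (`Subsingleton (AddUnits _)`; the relations never equate `0` with a
nonzero element): the kernel of a homomorphism into a conical monoid is an order-ideal.
Conversely, `v ↦ [a_v]` respects the relations of the quotient graph because the edges into `H`
contribute classes of `S`, which vanish in `M_E/S`.
-/

def AddCon.zeroIff (M : Type*) [AddCommMonoid M] [Subsingleton (AddUnits M)] : AddCon M where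
  r a b := a = 0 ↔ b = 0
  iseqv := ⟨fun _ => Iff.rfl, Iff.symm, Iff.trans⟩
  add' h₁ h₂ := by simp only [add_eq_zero, h₁, h₂]

theorem AddCon.subsingleton_addUnits_quotient {M : Type*} [AddCommMonoid M]
    [Subsingleton (AddUnits M)] {c : AddCon M} (hc : c ≤ AddCon.zeroIff M) :
    Subsingleton (AddUnits c.Quotient) := by
  refine Subsingleton.addUnits_of_isAddUnit fun a ha => ?_
  obtain ⟨b, hab, -⟩ := isAddUnit_iff_exists.mp ha
  induction a using AddCon.induction_on with | H α => ?_
  induction b using AddCon.induction_on with | H β => ?_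
  have hαβ : α + β = 0 := (hc ((c.eq).mp hab)).mpr rfl
  rw [(add_eq_zero.mp hαβ).1, AddCon.coe_zero]

namespace RFGraph

variable (G : RFGraph) {N : Type*} [AddCommMonoid N]

theorem rr_ne_zero {x : G.V} (hx : G.emits x) : G.rr x ≠ 0 := by
  obtain ⟨e, he⟩ := hx
  rw [rr, Ne, Finset.sum_eq_zero_iff]
  exact fun h => Finsupp.single_ne_zero.mpr one_ne_zero <|
    h e ((G.rowFinite x).mem_toFinset.mpr he)

theorem graphCon_le_zeroIff : G.graphCon ≤ AddCon.zeroIff G.F :=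
  AddCon.addConGen_le.mpr <| by
    rintro _ _ ⟨x, α, hx, rfl, rfl⟩
    simp [AddCon.zeroIff, G.rr_ne_zero hx]

instance : Subsingleton (AddUnits G.M) :=
  AddCon.subsingleton_addUnits_quotient G.graphCon_le_zeroIff

theorem av_eq_sum {x : G.V} (hx : G.emits x) :
    G.av x = ∑ e ∈ (G.rowFinite x).toFinset, G.av (G.r e) := by
  have hstep : G.step (Finsupp.single x 1) (G.rr x) :=
    ⟨x, 0, hx, (add_zero _).symm, (add_zero _).symm⟩
  rw [av, AddCon.coe_mk', (G.graphCon.eq).mpr (AddConGen.Rel.of _ _ hstep), ← AddCon.coe_mk',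
    rr, map_sum]
  rfl

noncomputable def lift (f : G.V → N)
    (hf : ∀ x, G.emits x → f x = ∑ e ∈ (G.rowFinite x).toFinset, f (G.r e)) : G.M →+ N :=
  G.graphCon.lift (Finsupp.liftAddHom fun v => multiplesHom N (f v)) <|
    show G.graphCon ≤ _ from AddCon.addConGen_le.mpr <| by
      rintro _ _ ⟨x, α, hx, rfl, rfl⟩
      simp only [AddCon.ker_rel, map_add, rr, map_sum, Finsupp.liftAddHom_apply_single,
        multiplesHom_apply, one_nsmul, hf x hx]

theorem lift_av (f : G.V → N)
    (hf : ∀ x, G.emits x → f x = ∑ e ∈ (G.rowFinite x).toFinset, f (G.r e)) (v : G.V) :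
    G.lift f hf (G.av v) = f v := by
  rw [lift, av, AddCon.lift_mk', Finsupp.liftAddHom_apply_single, multiplesHom_apply, one_nsmul]

variable {G} in
theorem hom_ext {f g : G.M →+ N} (h : ∀ v, f (G.av v) = g (G.av v)) : f = g :=
  AddCon.hom_ext <| Finsupp.addHom_ext' fun v => AddMonoidHom.ext_nat (h v)

theorem isOrderIdeal_ker [Subsingleton (AddUnits N)] (f : G.M →+ N) :
    G.IsOrderIdeal {m | f m = 0} :=
  ⟨map_zero f, fun x y hx hy => by simp_all,
    fun x y hxy => add_eq_zero.mp <| by simpa using hxy⟩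

theorem zero_mem_genOI (S : Set G.M) : 0 ∈ G.genOI S := fun _ hI => hI.1.1

theorem subset_genOI (S : Set G.M) : S ⊆ G.genOI S := fun _ hm _ hI => hI.2 hm

theorem genOI_subset {S I : Set G.M} (hI : G.IsOrderIdeal I) (hS : S ⊆ I) : G.genOI S ⊆ I :=
  Set.sInter_subset_of_mem ⟨hI, hS⟩

variable (H : Set G.V)

theorem quotCon_le_ker [Subsingleton (AddUnits N)] (f : G.M →+ N)
    (hf : ∀ v ∈ H, f (G.av v) = 0) :
    G.quotCon H ≤ AddCon.ker f := by
  have hS : G.genOI (G.av '' H) ⊆ {m | f m = 0} :=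
    G.genOI_subset (G.isOrderIdeal_ker f) (Set.image_subset_iff.mpr hf)
  refine AddCon.addConGen_le.mpr ?_
  rintro a b ⟨e, he, e', he', hab⟩
  have h₁ : f e = 0 := hS he
  have h₂ : f e' = 0 := hS he'
  simpa [h₁, h₂] using congr_arg f hab

theorem quotCon_mk'_av {v : G.V} (hv : v ∈ H) : (G.quotCon H).mk' (G.av v) = 0 := by
  have hS := G.subset_genOI (G.av '' H) ⟨v, hv, rfl⟩
  rw [← map_zero (G.quotCon H).mk', AddCon.coe_mk', AddCon.eq]
  exact AddConGen.Rel.of _ _ ⟨0, G.zero_mem_genOI _, G.av v, hS, by rw [add_zero, zero_add]⟩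

variable {G H} in
theorem quotCon_hom_ext {f g : (G.quotCon H).Quotient →+ N}
    (h : ∀ v, f ((G.quotCon H).mk' (G.av v)) = g ((G.quotCon H).mk' (G.av v))) : f = g :=
  AddCon.hom_ext <| hom_ext h

variable (hher : G.Hereditary H)

theorem emits_quotGraph (hsat : G.Saturated H) {x : G.V} (hxH : x ∉ H) (hx : G.emits x) :
    (G.quotGraph H hher).emits ⟨x, hxH⟩ := by
  by_contra hne
  exact hxH <| hsat x hx fun e he => by_contra fun heH => hne ⟨⟨e, heH⟩, Subtype.ext he⟩

theorem sum_edges_quotGraph (g : G.V → N) (hg : ∀ w ∈ H, g w = 0)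
    {x : G.V} (hx : x ∉ H) :
    ∑ e ∈ (G.rowFinite x).toFinset, g (G.r e)
      = ∑ e ∈ ((G.quotGraph H hher).rowFinite ⟨x, hx⟩).toFinset, g (G.r e.1) := by
  classical
  rw [← Finset.sum_filter_of_ne (p := fun e => G.r e ∉ H) fun e _ hne heH => hne (hg _ heH)]
  refine Finset.sum_bij' (fun e he => ⟨e, (Finset.mem_filter.mp he).2⟩) (fun e _ => e.1)
    (fun e he => ?_) (fun e he => ?_) (fun _ _ => rfl) (fun _ _ => rfl) (fun _ _ => rfl)
  · obtain ⟨he, -⟩ := Finset.mem_filter.mp he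
    refine (Set.Finite.mem_toFinset _).mpr (Subtype.ext ?_)
    exact (G.rowFinite x).mem_toFinset.mp he
  · rw [Set.Finite.mem_toFinset] at he
    exact Finset.mem_filter.mpr
      ⟨(Set.Finite.mem_toFinset _).mpr (congr_arg Subtype.val he), e.2⟩

open Classical in
noncomputable def collapse (v : G.V) : (G.quotGraph H hher).M :=
  if hv : v ∈ H then 0 else (G.quotGraph H hher).av ⟨v, hv⟩

theorem collapse_of_mem {v : G.V} (hv : v ∈ H) : G.collapse H hher v = 0 := by
  rw [collapse, dif_pos hv]

theorem collapse_of_not_mem {v : G.V} (hv : v ∉ H) :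
    G.collapse H hher v = (G.quotGraph H hher).av ⟨v, hv⟩ := by
  rw [collapse, dif_neg hv]

theorem collapse_eq_sum (hsat : G.Saturated H) {x : G.V} (hx : G.emits x) :
    G.collapse H hher x = ∑ e ∈ (G.rowFinite x).toFinset, G.collapse H hher (G.r e) := by
  by_cases hxH : x ∈ H
  · rw [collapse_of_mem G H hher hxH, eq_comm]
    refine Finset.sum_eq_zero fun e he => G.collapse_of_mem H hher <|
      hher x _ hxH (.single ⟨e, (G.rowFinite x).mem_toFinset.mp he, rfl⟩)
  · rw [G.sum_edges_quotGraph H hher _ (fun w => G.collapse_of_mem H hher) hxH,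
      G.collapse_of_not_mem H hher hxH, av_eq_sum _ (G.emits_quotGraph H hher hsat hxH hx)]
    exact Finset.sum_congr rfl fun e _ => (G.collapse_of_not_mem H hher e.2).symm

noncomputable def toQuotGraph (hsat : G.Saturated H) :
    (G.quotCon H).Quotient →+ (G.quotGraph H hher).M :=
  (G.quotCon H).lift (G.lift (G.collapse H hher) fun _ => G.collapse_eq_sum H hher hsat) <|
    G.quotCon_le_ker H _ fun v hv => by rw [lift_av, collapse_of_mem G H hher hv]

theorem toQuotGraph_mk'_av (hsat : G.Saturated H) (v : G.V) :
    G.toQuotGraph H hher hsat ((G.quotCon H).mk' (G.av v)) = G.collapse H hher v := by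
  rw [toQuotGraph, AddCon.lift_mk', lift_av]

noncomputable def fromQuotGraph : (G.quotGraph H hher).M →+ (G.quotCon H).Quotient :=
  (G.quotGraph H hher).lift (fun v => (G.quotCon H).mk' (G.av v.1)) fun x ⟨e, he⟩ => by
    have hx : G.emits x.1 := ⟨e.1, congr_arg Subtype.val he⟩
    rw [G.av_eq_sum hx, map_sum]
    exact G.sum_edges_quotGraph H hher (fun w => (G.quotCon H).mk' (G.av w))
      (fun w => G.quotCon_mk'_av H) x.2

theorem fromQuotGraph_av (v : (G.quotGraph H hher).V) :
    G.fromQuotGraph H hher ((G.quotGraph H hher).av v) = (G.quotCon H).mk' (G.av v.1) :=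
  lift_av _ _ _ v

noncomputable def quotConEquiv (hsat : G.Saturated H) :
    (G.quotCon H).Quotient ≃+ (G.quotGraph H hher).M := by
  refine (G.toQuotGraph H hher hsat).toAddEquiv (G.fromQuotGraph H hher) ?_ ?_
  · refine quotCon_hom_ext (N := (G.quotCon H).Quotient) fun v => ?_
    rw [AddMonoidHom.comp_apply, AddMonoidHom.id_apply, toQuotGraph_mk'_av]
    by_cases hv : v ∈ H
    · rw [collapse_of_mem G H hher hv, map_zero, G.quotCon_mk'_av H hv]
    · rw [collapse_of_not_mem G H hher hv]
      exact G.fromQuotGraph_av H hher ⟨v, hv⟩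
  · refine hom_ext fun v => ?_
    rw [AddMonoidHom.comp_apply, AddMonoidHom.id_apply, fromQuotGraph_av, toQuotGraph_mk'_av,
      collapse_of_not_mem G H hher v.2]
    rfl

theorem quotConEquiv_mk'_av (hsat : G.Saturated H) {v : G.V} (hv : v ∉ H) :
    G.quotConEquiv H hher hsat ((G.quotCon H).mk' (G.av v)) = (G.quotGraph H hher).av ⟨v, hv⟩ :=
  (G.toQuotGraph_mk'_av H hher hsat v).trans (G.collapse_of_not_mem H hher hv)

end RFGraph

/-- For a hereditary saturated `H`, the map `a_v ↦ 0` (`v ∈ H`),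
`a_v ↦ a_v` (`v ∉ H`) induces a monoid isomorphism `M_E/S ≅ M_G`, where `S` is the
order-ideal generated by `{a_v : v ∈ H}` and `G` is the quotient graph. -/
theorem stmt11 (G : RFGraph) (H : Set G.V)
    (hher : G.Hereditary H) (hsat : G.Saturated H) :
    ∃ φ : (G.quotCon H).Quotient ≃+ (G.quotGraph H hher).M,
      (∀ (v : G.V) (hv : v ∉ H),
          φ ((G.quotCon H).mk' (G.av v)) = (G.quotGraph H hher).av ⟨v, hv⟩) ∧
      (∀ v ∈ H, (G.quotCon H).mk' (G.av v) = 0) :=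
  ⟨G.quotConEquiv H hher hsat, fun _ hv => G.quotConEquiv_mk'_av H hher hsat hv,
    fun _ hv => G.quotCon_mk'_av H hv⟩
end
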